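/- arXiv:0811.0543 — 4 statements merged into one kernel-verified Lean document; each statement's English description precedes it below -/
import Mathlib

section
/- Let N ≥ 1, g₀, g₁, …, g_N ∈ ℂ and ρ ≥ 0. Let H_eq be the 2N×2N block-diagonal complex matrix whose n-th diagonal 2×2 block is H_n = [[g₀, 0],[g_n/√2, g₀/√2]]. Then the instantaneous capacity C(H_eq) = (1/(2N))·log₂ det(I_{2N} + ρ·H_eq·H_eq†) satisfies C(H_eq) = (1/(2N))·Σ_{n=1}^{N} log₂( 1 + (ρ/2)(3|g₀|² + |g_n|²) + (ρ²/2)|g₀|⁴ ). -/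
/-!
`1 + ρ H_eq H_eqᴴ` is block diagonal with blocks `1 + ρ H_n H_nᴴ`, so its determinant is the
product of theirs. For a `2 × 2` matrix, `det (1 + A) = 1 + tr A + det A`, which gives
`det (1 + ρ H Hᴴ) = 1 + ρ ‖H‖_F² + ρ² |det H|²`; for `H_n` one has
`‖H_n‖_F² = (3|g₀|² + |g_n|²) / 2` and `|det H_n|² = |g₀|⁴ / 2`. Since `ρ ≥ 0` every factor is
positive, and `log₂` turns the product into the sum.
-/

open Matrix

theorem Matrix.det_one_add_blockDiagonal_smul_mul_conjTranspose {o m R : Type*}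
    [Fintype o] [DecidableEq o] [Fintype m] [DecidableEq m] [CommRing R] [StarRing R]
    (c : R) (M : o → Matrix m m R) :
    det (1 + c • (blockDiagonal M * (blockDiagonal M)ᴴ)) =
      ∏ k, det (1 + c • (M k * (M k)ᴴ)) := by
  rw [blockDiagonal_conjTranspose, ← blockDiagonal_mul, ← blockDiagonal_smul,
    ← blockDiagonal_one, ← blockDiagonal_add, det_blockDiagonal]
  rfl

theorem Matrix.det_one_add_fin_two {R : Type*} [CommRing R] (A : Matrix (Fin 2) (Fin 2) R) :
    det (1 + A) = 1 + trace A + det A := by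
  simp only [det_fin_two, trace_fin_two, add_apply, one_apply_eq,
    one_apply_ne (by decide : (0 : Fin 2) ≠ 1), one_apply_ne (by decide : (1 : Fin 2) ≠ 0)]
  ring

theorem Matrix.trace_mul_conjTranspose_self_eq_sum_norm_sq {m n 𝕜 : Type*} [Fintype m]
    [Fintype n] [RCLike 𝕜] (H : Matrix m n 𝕜) :
    trace (H * Hᴴ) = ((∑ i, ∑ j, ‖H i j‖ ^ 2 : ℝ) : 𝕜) := by
  simp only [trace, diag_apply, mul_apply, conjTranspose_apply, RCLike.star_def, RCLike.mul_conj]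
  push_cast
  rfl

theorem Matrix.det_one_add_ofReal_smul_mul_conjTranspose_fin_two (ρ : ℝ)
    (H : Matrix (Fin 2) (Fin 2) ℂ) :
    det (1 + (ρ : ℂ) • (H * Hᴴ)) =
      ((1 + ρ * ∑ i, ∑ j, ‖H i j‖ ^ 2 + ρ ^ 2 * ‖det H‖ ^ 2 : ℝ) : ℂ) := by
  rw [det_one_add_fin_two, trace_smul, trace_mul_conjTranspose_self_eq_sum_norm_sq,
    RCLike.ofReal_eq_complex_ofReal, det_smul, det_mul, det_conjTranspose, Complex.star_def,
    Complex.mul_conj, Complex.normSq_eq_norm_sq, Fintype.card_fin, smul_eq_mul]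
  push_cast
  ring

theorem det_one_add_smul_mul_conjTranspose_incompleteDF_block (ρ : ℝ) (a b : ℂ) :
    det (1 + (ρ : ℂ) • (!![a, 0; b / (Real.sqrt 2 : ℂ), a / (Real.sqrt 2 : ℂ)] *
        (!![a, 0; b / (Real.sqrt 2 : ℂ), a / (Real.sqrt 2 : ℂ)])ᴴ)) =
      ((1 + (ρ / 2) * (3 * ‖a‖ ^ 2 + ‖b‖ ^ 2) + (ρ ^ 2 / 2) * ‖a‖ ^ 4 : ℝ) : ℂ) := by
  rw [det_one_add_ofReal_smul_mul_conjTranspose_fin_two, det_fin_two_of]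
  have norm_sqrt_two_sq : ‖((Real.sqrt 2 : ℝ) : ℂ)‖ ^ 2 = 2 := by
    rw [Complex.norm_real, Real.norm_eq_abs, sq_abs, Real.sq_sqrt zero_le_two]
  congr 1
  simp only [Fin.sum_univ_two, of_apply, cons_val', cons_val_zero, cons_val_one, empty_val',
    cons_val_fin_one, zero_mul, sub_zero, norm_zero, norm_mul, norm_div, div_pow, mul_pow,
    norm_sqrt_two_sq]
  ring

theorem incomplete_df_capacity_general (N : ℕ)
    (g₀ : ℂ) (g : Fin N → ℂ) (ρ : ℝ) (hρ : 0 ≤ ρ)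
    (Hn : Fin N → Matrix (Fin 2) (Fin 2) ℂ)
    (hHn : ∀ n, Hn n = !![g₀, 0; g n / (Real.sqrt 2 : ℂ), g₀ / (Real.sqrt 2 : ℂ)]) :
    (1 / (2 * (N : ℝ))) *
        Real.logb 2 ((det (1 + (ρ : ℂ) • (blockDiagonal Hn * (blockDiagonal Hn)ᴴ))).re) =
      (1 / (2 * (N : ℝ))) * ∑ n : Fin N,
        Real.logb 2 (1 + (ρ / 2) * (3 * ‖g₀‖ ^ 2 + ‖g n‖ ^ 2)
          + (ρ ^ 2 / 2) * ‖g₀‖ ^ 4) := by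
  simp only [det_one_add_blockDiagonal_smul_mul_conjTranspose, hHn,
    det_one_add_smul_mul_conjTranspose_incompleteDF_block, ← Complex.ofReal_prod,
    Complex.ofReal_re]
  rw [Real.logb_prod _ _ fun n _ => by positivity]

/-- the instantaneous capacity C(H_eq) = (1/(2N))·log₂ det(I + ρ·H_eq·H_eq†)
of the equivalent channel of the Incomplete DF protocol (block-diagonal with blocks
H_n = [[g₀,0],[g_n/√2, g₀/√2]]) equals
(1/(2N))·Σₙ log₂(1 + (ρ/2)(3|g₀|² + |g_n|²) + (ρ²/2)|g₀|⁴).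
(The determinant is a positive real number; its real part is used as its value.) -/
theorem incomplete_df_capacity (N : ℕ) (hN : 1 ≤ N)
    (g₀ : ℂ) (g : Fin N → ℂ) (ρ : ℝ) (hρ : 0 ≤ ρ)
    (Hn : Fin N → Matrix (Fin 2) (Fin 2) ℂ)
    (hHn : ∀ n, Hn n = !![g₀, 0; g n / (Real.sqrt 2 : ℂ), g₀ / (Real.sqrt 2 : ℂ)]) :
    (1 / (2 * (N : ℝ))) *
        Real.logb 2 ((det (1 + (ρ : ℂ) • (blockDiagonal Hn * (blockDiagonal Hn)ᴴ))).re) =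
      (1 / (2 * (N : ℝ))) * ∑ n : Fin N,
        Real.logb 2 (1 + (ρ / 2) * (3 * ‖g₀‖ ^ 2 + ‖g n‖ ^ 2)
          + (ρ ^ 2 / 2) * ‖g₀‖ ^ 4) :=
  incomplete_df_capacity_general N g₀ g ρ hρ Hn hHn
end

section
/- Let X be an Exp(1)-distributed random variable and let a ∈ (0,1). Then lim_{ρ→∞} ln P{ log₂(1 + ρ·X) < a·log₂ ρ } / ln ρ = −(1 − a). -/
open MeasureTheory Filter

/-- An Exp(1)-distributed random variable: P{X > t} = e^{−t} for all t ≥ 0. -/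
def IsExp1 {Ω : Type*} [MeasurableSpace Ω] (μ : Measure Ω) (X : Ω → ℝ) : Prop :=
  Measurable X ∧ ∀ t : ℝ, 0 ≤ t → μ {ω | t < X ω} = ENNReal.ofReal (Real.exp (-t))

lemma isExp1_event_eq {Ω : Type*} [MeasurableSpace Ω] (μ : Measure Ω) [IsProbabilityMeasure μ]
    (X : Ω → ℝ) (hX : IsExp1 μ X) (ρ a : ℝ) (hρ : 1 < ρ) :
    μ {ω | Real.logb 2 (1 + ρ * X ω) < a * Real.logb 2 ρ}
      = μ {ω | 0 < X ω ∧ X ω < (ρ ^ a - 1) / ρ} := by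
  have hρ0 : (0:ℝ) < ρ := lt_trans one_pos hρ
  have hnull : μ {ω | ¬ (0:ℝ) < X ω} = 0 := by
    have h1 : μ {ω | (0:ℝ) < X ω} = 1 := by
      have := hX.2 0 le_rfl
      simpa using this
    have hm : MeasurableSet {ω | (0:ℝ) < X ω} := measurableSet_lt measurable_const hX.1
    have hs : {ω | ¬ (0:ℝ) < X ω} = {ω | (0:ℝ) < X ω}ᶜ := rfl
    rw [hs, measure_compl hm (measure_ne_top μ _), h1, measure_univ, tsub_self]
  have key : ∀ x : ℝ, 0 < x →
      (Real.logb 2 (1 + ρ * x) < a * Real.logb 2 ρ ↔ x < (ρ ^ a - 1) / ρ) := by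
    intro x hx
    have h1 : (0:ℝ) < 1 + ρ * x := by nlinarith
    have hρa : (0:ℝ) < ρ ^ a := Real.rpow_pos_of_pos hρ0 a
    rw [show a * Real.logb 2 ρ = Real.logb 2 (ρ ^ a) from
      (Real.logb_rpow_eq_mul_logb_of_pos hρ0).symm]
    rw [Real.logb_lt_logb_iff (by norm_num : (1:ℝ) < 2) h1 hρa, lt_div_iff₀ hρ0]
    constructor <;> intro h <;> nlinarith
  apply le_antisymm
  · calc μ {ω | Real.logb 2 (1 + ρ * X ω) < a * Real.logb 2 ρ}
        ≤ μ ({ω | 0 < X ω ∧ X ω < (ρ ^ a - 1) / ρ} ∪ {ω | ¬ (0:ℝ) < X ω}) := by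
          apply measure_mono
          intro ω hω
          by_cases h : 0 < X ω
          · exact Or.inl ⟨h, (key _ h).1 hω⟩
          · exact Or.inr h
      _ ≤ μ {ω | 0 < X ω ∧ X ω < (ρ ^ a - 1) / ρ} + μ {ω | ¬ (0:ℝ) < X ω} :=
          measure_union_le _ _
      _ = μ {ω | 0 < X ω ∧ X ω < (ρ ^ a - 1) / ρ} := by rw [hnull, add_zero]
  · exact measure_mono (fun ω hω => (key _ hω.1).2 hω.2)

lemma isExp1_prob_bounds {Ω : Type*} [MeasurableSpace Ω] (μ : Measure Ω) [IsProbabilityMeasure μ]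
    (X : Ω → ℝ) (hX : IsExp1 μ X) (t : ℝ) (ht : 0 < t) :
    Real.exp (-(t/2)) - Real.exp (-(3*t/4)) ≤ (μ {ω | 0 < X ω ∧ X ω < t}).toReal ∧
    (μ {ω | 0 < X ω ∧ X ω < t}).toReal ≤ 1 - Real.exp (-t) := by
  have hm : ∀ s : ℝ, MeasurableSet {ω | s < X ω} :=
    fun s => measurableSet_lt measurable_const hX.1
  constructor
  · -- lower bound
    have hsub1 : {ω | 3*t/4 < X ω} ⊆ {ω | t/2 < X ω} := fun ω h => by
      simp only [Set.mem_setOf_eq] at *; linarith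
    have hsub2 : {ω | t/2 < X ω} \ {ω | 3*t/4 < X ω} ⊆ {ω | 0 < X ω ∧ X ω < t} := by
      intro ω ⟨h1, h2⟩
      simp only [Set.mem_setOf_eq] at *
      constructor <;> linarith [not_lt.mp h2]
    have hd : μ ({ω | t/2 < X ω} \ {ω | 3*t/4 < X ω})
        = ENNReal.ofReal (Real.exp (-(t/2))) - ENNReal.ofReal (Real.exp (-(3*t/4))) := by
      rw [measure_diff hsub1 ((hm _).nullMeasurableSet) (measure_ne_top μ _),
        hX.2 (t/2) (by linarith), hX.2 (3*t/4) (by linarith)]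
    have hle : μ ({ω | t/2 < X ω} \ {ω | 3*t/4 < X ω}) ≤ μ {ω | 0 < X ω ∧ X ω < t} :=
      measure_mono hsub2
    have := ENNReal.toReal_mono (measure_ne_top μ _) hle
    rw [hd, ← ENNReal.ofReal_sub _ (Real.exp_nonneg _),
      ENNReal.toReal_ofReal (sub_nonneg.mpr (Real.exp_le_exp.2 (by linarith)))] at this
    exact this
  · -- upper bound
    have hsub : {ω | 0 < X ω ∧ X ω < t} ⊆ {ω | 0 < X ω} \ {ω | t < X ω} := by
      intro ω ⟨h1, h2⟩
      exact ⟨h1, by simp only [Set.mem_setOf_eq]; linarith⟩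
    have hsub' : {ω | t < X ω} ⊆ {ω | 0 < X ω} := fun ω h => by
      simp only [Set.mem_setOf_eq] at *; linarith
    have hd : μ ({ω | 0 < X ω} \ {ω | t < X ω})
        = 1 - ENNReal.ofReal (Real.exp (-t)) := by
      rw [measure_diff hsub' ((hm _).nullMeasurableSet) (measure_ne_top μ _),
        hX.2 0 le_rfl, hX.2 t ht.le]
      norm_num
    have hle : μ {ω | 0 < X ω ∧ X ω < t} ≤ 1 - ENNReal.ofReal (Real.exp (-t)) := by
      rw [← hd]; exact measure_mono hsub
    have := ENNReal.toReal_mono (by finiteness) hle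
    calc (μ {ω | 0 < X ω ∧ X ω < t}).toReal
        ≤ ((1 : ENNReal) - ENNReal.ofReal (Real.exp (-t))).toReal := this
      _ ≤ 1 - Real.exp (-t) := by
          rw [show (1:ENNReal) = ENNReal.ofReal 1 by simp,
            ← ENNReal.ofReal_sub _ (Real.exp_nonneg _),
            ENNReal.toReal_ofReal (by simp [Real.exp_le_one_iff]; linarith)]

/-- the diversity exponent of the outage probability of a Rayleigh link at
multiplexing gain a ∈ (0,1): lim_{ρ→∞} ln P{log₂(1+ρX) < a·log₂ ρ} / ln ρ = −(1−a). -/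
theorem rayleigh_outage_diversity_exponent {Ω : Type*} [MeasurableSpace Ω]
    (μ : Measure Ω) [IsProbabilityMeasure μ] (X : Ω → ℝ) (hX : IsExp1 μ X)
    (a : ℝ) (ha0 : 0 < a) (ha1 : a < 1) :
    Tendsto (fun ρ : ℝ =>
        Real.log ((μ {ω | Real.logb 2 (1 + ρ * X ω) < a * Real.logb 2 ρ}).toReal)
          / Real.log ρ)
      atTop (nhds (-(1 - a))) := by
  have hgoal : -(1 - a) = a - 1 := by ring
  rw [hgoal]
  set K : ℝ := Real.log 2 + 3/4 + Real.log 4 with hK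
  have hKpos : 0 < K := by
    have := Real.log_pos (by norm_num : (1:ℝ) < 2)
    have := Real.log_pos (by norm_num : (1:ℝ) < 4)
    positivity
  have hmain : ∀ᶠ ρ : ℝ in atTop,
      ((a - 1) - K / Real.log ρ ≤
        Real.log ((μ {ω | Real.logb 2 (1 + ρ * X ω) < a * Real.logb 2 ρ}).toReal)
          / Real.log ρ ∧
       Real.log ((μ {ω | Real.logb 2 (1 + ρ * X ω) < a * Real.logb 2 ρ}).toReal)
          / Real.log ρ ≤ a - 1) := by
    filter_upwards [eventually_ge_atTop (2:ℝ),
      (tendsto_rpow_atTop ha0).eventually_ge_atTop (2:ℝ)] with ρ hρ2 hρa2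
    have hρ1 : (1:ℝ) < ρ := by linarith
    have hρ0 : (0:ℝ) < ρ := by linarith
    have hlog : 0 < Real.log ρ := Real.log_pos hρ1
    set t : ℝ := (ρ ^ a - 1) / ρ with htdef
    have ht0 : 0 < t := div_pos (by linarith) hρ0
    rw [isExp1_event_eq μ X hX ρ a hρ1]
    set p : ℝ := (μ {ω | 0 < X ω ∧ X ω < t}).toReal with hpdef
    obtain ⟨hpl, hpu⟩ := isExp1_prob_bounds μ X hX t ht0
    have hp_up : p ≤ t := by
      have := Real.add_one_le_exp (-t)
      rw [← hpdef] at hpu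
      linarith
    have hp_lo : Real.exp (-3/4) / 4 * t ≤ p := by
      rw [← hpdef] at hpl
      have ht1 : t ≤ 1 := by
        rw [htdef, div_le_one hρ0]
        have : ρ ^ a ≤ ρ ^ (1:ℝ) := Real.rpow_le_rpow_of_exponent_le hρ1.le ha1.le
        rw [Real.rpow_one] at this
        linarith
      have e1 : Real.exp (-(t/2)) = Real.exp (-(3*t/4)) * Real.exp (t/4) := by
        rw [← Real.exp_add]; ring_nf
      have e2 : t/4 + 1 ≤ Real.exp (t/4) := Real.add_one_le_exp _
      have e3 : Real.exp (-3/4) ≤ Real.exp (-(3*t/4)) := Real.exp_le_exp.2 (by linarith)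
      have e5 : Real.exp (-3/4) * (t/4) ≤ Real.exp (-(3*t/4)) * (Real.exp (t/4) - 1) :=
        mul_le_mul e3 (by linarith) (by linarith) (Real.exp_pos _).le
      nlinarith
    have hp_pos : 0 < p := lt_of_lt_of_le (by positivity) hp_lo
    have hta : t ≤ ρ ^ (a - 1) := by
      have h1 : t ≤ ρ ^ a / ρ := by rw [htdef]; gcongr; linarith
      rwa [Real.rpow_sub hρ0, Real.rpow_one]
    have htb : ρ ^ (a - 1) / 2 ≤ t := by
      calc ρ ^ (a-1)/2 = (ρ ^ a / 2) / ρ := by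
            rw [Real.rpow_sub hρ0, Real.rpow_one]; ring
        _ ≤ (ρ ^ a - 1) / ρ := by gcongr; linarith
    have hlogt_up : Real.log t ≤ (a - 1) * Real.log ρ := by
      calc Real.log t ≤ Real.log (ρ ^ (a-1)) := Real.log_le_log ht0 hta
        _ = (a-1) * Real.log ρ := Real.log_rpow hρ0 _
    have hlogp_up : Real.log p ≤ (a - 1) * Real.log ρ :=
      (Real.log_le_log hp_pos hp_up).trans hlogt_up
    have hlogt_lo : (a - 1) * Real.log ρ - Real.log 2 ≤ Real.log t := by
      calc (a-1)*Real.log ρ - Real.log 2 = Real.log (ρ ^ (a-1) / 2) := by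
            rw [Real.log_div (by positivity) two_ne_zero, Real.log_rpow hρ0]
        _ ≤ Real.log t := Real.log_le_log (by positivity) htb
    have hlogp_lo : (a - 1) * Real.log ρ - K ≤ Real.log p := by
      have h1 : Real.log (Real.exp (-3/4) / 4 * t) ≤ Real.log p :=
        Real.log_le_log (by positivity) hp_lo
      rw [Real.log_mul (by positivity) ht0.ne', Real.log_div (Real.exp_ne_zero _)
        (by norm_num), Real.log_exp] at h1
      rw [hK]
      linarith
    constructor
    · rw [le_div_iff₀ hlog]
      have heq : ((a-1) - K / Real.log ρ) * Real.log ρ = (a-1) * Real.log ρ - K := by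
        field_simp
      rw [heq]; exact hlogp_lo
    · rw [div_le_iff₀ hlog]; exact hlogp_up
  apply tendsto_of_tendsto_of_tendsto_of_le_of_le'
    (g := fun ρ : ℝ => (a - 1) - K / Real.log ρ) (h := fun _ : ℝ => a - 1)
  · have h0 : Tendsto (fun ρ : ℝ => K / Real.log ρ) atTop (nhds 0) :=
      tendsto_const_nhds.div_atTop Real.tendsto_log_atTop
    simpa using tendsto_const_nhds.sub h0
  · exact tendsto_const_nhds
  · exact hmain.mono fun ρ h => h.1
  · exact hmain.mono fun ρ h => h.2
end

section
/- Let N ≥ 1 and 0 ≤ k ≤ N be integers, let r ∈ (0, 1/2), and let H₁, …, H_N be independent Exp(1)-distributed random variables. For ρ > 1 define Q(ρ) = ∏_{i=1}^{k} P{ log₂(1+ρH_i) ≥ 2r·log₂ ρ } · ∏_{i=k+1}^{N} P{ log₂(1+ρH_i) < 2r·log₂ ρ }. Then lim_{ρ→∞} ln Q(ρ) / ln ρ = −(N−k)·(1−2r). -/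
open MeasureTheory ProbabilityTheory Filter Finset

/-!
Almost surely, link `i` is not in outage iff `outageThreshold (2r) ρ ≤ Hᵢ`, with threshold
`t(ρ) = (ρ^{2r} - 1)/ρ → 0`, so `Q(ρ) = e^{-k t(ρ)} (1 - e^{-t(ρ)})^{N-k}`. The first factor tends
to `1`, and `1 - e^{-t} ∼ t ∼ ρ^{2r-1}`, so `log Q(ρ) ≈ (N - k)(2r - 1) log ρ`.
-/

open Real Topology

/-- `log (1 + ρ x) < c log ρ` iff `x` lies below this threshold; for `c = 2r` it is the outage
threshold of a source–relay link at SNR `ρ`. -/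
noncomputable def outageThreshold (c ρ : ℝ) : ℝ := (ρ ^ c - 1) / ρ

theorem outageThreshold_pos {c ρ : ℝ} (hc : 0 < c) (hρ : 1 < ρ) : 0 < outageThreshold c ρ :=
  div_pos (sub_pos.2 (one_lt_rpow hρ hc)) (by linarith)

theorem mul_logb_le_logb_one_add_mul_iff {b c ρ x : ℝ} (hb : 1 < b) (hρ : 0 < ρ) (hx : 0 ≤ x) :
    c * logb b ρ ≤ logb b (1 + ρ * x) ↔ outageThreshold c ρ ≤ x := by
  rw [← logb_rpow_eq_mul_logb_of_pos hρ, logb_le_logb hb (by positivity) (by positivity),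
    outageThreshold, div_le_iff₀ hρ]
  constructor <;> intro h <;> linarith

namespace IsExp1

variable {Ω : Type*} [MeasurableSpace Ω] {μ : Measure Ω} {X : Ω → ℝ} {b c ρ t : ℝ}

theorem ae_pos [IsProbabilityMeasure μ] (hX : IsExp1 μ X) : ∀ᵐ ω ∂μ, 0 < X ω := by
  have h : μ {ω | 0 < X ω} = 1 := by simpa using hX.2 0 le_rfl
  exact ae_iff.2 ((prob_compl_eq_zero_iff (measurableSet_lt measurable_const hX.1)).2 h)

/-- `{t ≤ X}` is the decreasing limit of the events `{t - u < X}` as `u ↓ 0`. -/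
theorem measure_ge [IsFiniteMeasure μ] (hX : IsExp1 μ X) (ht : 0 < t) :
    μ {ω | t ≤ X ω} = ENNReal.ofReal (exp (-t)) := by
  have hInter : ⋂ u > 0, {ω | t - u < X ω} = {ω | t ≤ X ω} := by
    ext ω
    simp only [Set.mem_iInter, Set.mem_ofPred_eq, sub_lt_iff_lt_add, ← le_iff_forall_pos_lt_add]
  have hlim := tendsto_measure_biInter_gt (μ := μ) (s := fun u => {ω | t - u < X ω}) (a := 0)
    (fun _ _ => (measurableSet_lt measurable_const hX.1).nullMeasurableSet)
    (fun u v _ huv ω (hω : t - u < X ω) => show t - v < X ω by linarith)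
    ⟨1, one_pos, measure_ne_top μ _⟩
  rw [hInter] at hlim
  have hcont : Tendsto (fun u : ℝ => ENNReal.ofReal (exp (-(t - u)))) (𝓝[>] 0)
      (𝓝 (ENNReal.ofReal (exp (-t)))) := by
    refine tendsto_nhdsWithin_of_tendsto_nhds ?_
    have : Continuous fun u : ℝ => ENNReal.ofReal (exp (-(t - u))) :=
      ENNReal.continuous_ofReal.comp (by fun_prop)
    simpa using this.tendsto 0
  refine tendsto_nhds_unique hlim (hcont.congr' ?_)
  filter_upwards [Ioo_mem_nhdsGT ht] with u hu
  exact (hX.2 _ (by linarith [hu.2])).symm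

theorem measureReal_ge [IsFiniteMeasure μ] (hX : IsExp1 μ X) (ht : 0 < t) :
    μ.real {ω | t ≤ X ω} = exp (-t) := by
  rw [measureReal_def, hX.measure_ge ht, ENNReal.toReal_ofReal (exp_pos _).le]

theorem measureReal_lt [IsProbabilityMeasure μ] (hX : IsExp1 μ X) (ht : 0 < t) :
    μ.real {ω | X ω < t} = 1 - exp (-t) := by
  rw [← hX.measureReal_ge ht, ← probReal_compl_eq_one_sub (measurableSet_le measurable_const hX.1)]
  simp only [Set.compl_ofPred, not_le]

theorem measureReal_not_outage [IsProbabilityMeasure μ] (hX : IsExp1 μ X) (hb : 1 < b) (hc : 0 < c) (hρ : 1 < ρ) :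
    μ.real {ω | c * logb b ρ ≤ logb b (1 + ρ * X ω)} = exp (-outageThreshold c ρ) := by
  rw [← hX.measureReal_ge (outageThreshold_pos hc hρ)]
  refine measureReal_congr ?_
  filter_upwards [hX.ae_pos] with ω hω
  exact propext (mul_logb_le_logb_one_add_mul_iff hb (by linarith) hω.le)

theorem measureReal_outage [IsProbabilityMeasure μ] (hX : IsExp1 μ X) (hb : 1 < b) (hc : 0 < c) (hρ : 1 < ρ) :
    μ.real {ω | logb b (1 + ρ * X ω) < c * logb b ρ} = 1 - exp (-outageThreshold c ρ) := by
  rw [← hX.measureReal_lt (outageThreshold_pos hc hρ)]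
  refine measureReal_congr ?_
  filter_upwards [hX.ae_pos] with ω hω
  exact propext (not_le.symm.trans
    ((mul_logb_le_logb_one_add_mul_iff hb (by linarith) hω.le).not.trans not_le))

end IsExp1

theorem tendsto_outageThreshold_nhdsGT_zero {c : ℝ} (hc0 : 0 < c) (hc1 : c < 1) :
    Tendsto (outageThreshold c) atTop (𝓝[>] 0) := by
  refine tendsto_nhdsWithin_iff.2 ⟨?_, ?_⟩
  · have h : Tendsto (fun ρ : ℝ => ρ ^ (c - 1) - ρ⁻¹) atTop (𝓝 0) := by
      simpa using (tendsto_rpow_neg_atTop (y := 1 - c) (by linarith)).sub tendsto_inv_atTop_zero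
        |>.congr fun ρ => by rw [neg_sub]
    refine h.congr' ?_
    filter_upwards [eventually_gt_atTop 0] with ρ hρ
    rw [outageThreshold, sub_div, rpow_sub hρ, rpow_one, one_div]
  · filter_upwards [eventually_gt_atTop 1] with ρ hρ
    exact outageThreshold_pos hc0 hρ

/-- `1 - e^{-t} ∼ t` as `t → 0⁺`, the derivative of `1 - e^{-t}` at `0` being `1`. -/
theorem tendsto_log_one_sub_exp_neg_sub_log :
    Tendsto (fun t => log (1 - exp (-t)) - log t) (𝓝[>] 0) (𝓝 0) := by
  have hderiv : HasDerivAt (fun s : ℝ => 1 - exp (-s)) 1 0 := by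
    simpa using ((hasDerivAt_exp (-0 : ℝ)).comp 0 (hasDerivAt_neg 0)).const_sub 1
  have hslope : Tendsto (fun t => (1 - exp (-t)) / t) (𝓝[>] 0) (𝓝 1) := by
    refine (hasDerivAt_iff_tendsto_slope.1 hderiv).mono_left (nhdsGT_le_nhdsNE 0) |>.congr ?_
    intro t
    simp [slope_def_field]
  have hlog := ((continuousAt_log one_ne_zero).tendsto.comp hslope)
  rw [log_one] at hlog
  refine hlog.congr' ?_
  filter_upwards [self_mem_nhdsWithin] with t (ht : 0 < t)
  have hpos : 0 < 1 - exp (-t) := by simp [ht]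
  exact log_div hpos.ne' ht.ne'

theorem tendsto_log_rpow_sub_one_sub_mul_log {c : ℝ} (hc : 0 < c) :
    Tendsto (fun ρ => log (ρ ^ c - 1) - c * log ρ) atTop (𝓝 0) := by
  have h : Tendsto (fun ρ : ℝ => log (1 - ρ ^ (-c))) atTop (𝓝 0) := by
    have h1 : Tendsto (fun ρ : ℝ => 1 - ρ ^ (-c)) atTop (𝓝 1) := by
      simpa using tendsto_const_nhds.sub (tendsto_rpow_neg_atTop hc)
    simpa [Function.comp_def] using (continuousAt_log one_ne_zero).tendsto.comp h1
  refine h.congr' ?_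
  filter_upwards [eventually_gt_atTop 1] with ρ hρ
  have hρc : 1 < ρ ^ c := one_lt_rpow hρ hc
  rw [← log_rpow (by linarith), ← log_div (by linarith) (by linarith), sub_div, div_self
    (by linarith), rpow_neg (by linarith), one_div]

/-- The bounded corrections `log((1 - e^{-t})/t)` and `log(1 - ρ^{-c})` vanish against `log ρ`,
leaving `log t(ρ) ≈ (c - 1) log ρ`. -/
theorem tendsto_log_one_sub_exp_neg_outageThreshold_div_log {c : ℝ} (hc0 : 0 < c) (hc1 : c < 1) :
    Tendsto (fun ρ => log (1 - exp (-outageThreshold c ρ)) / log ρ) atTop (𝓝 (c - 1)) := by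
  have hbounded : Tendsto (fun ρ => (log (1 - exp (-outageThreshold c ρ))
      - log (outageThreshold c ρ)) + (log (ρ ^ c - 1) - c * log ρ)) atTop (𝓝 0) := by
    simpa using (tendsto_log_one_sub_exp_neg_sub_log.comp
      (tendsto_outageThreshold_nhdsGT_zero hc0 hc1)).add (tendsto_log_rpow_sub_one_sub_mul_log hc0)
  have hinv : Tendsto (fun ρ => (log ρ)⁻¹) atTop (𝓝 0) := tendsto_log_atTop.inv_tendsto_atTop
  have hlim := (hbounded.mul hinv).add_const (c - 1)
  rw [zero_mul, zero_add] at hlim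
  refine hlim.congr' ?_
  filter_upwards [eventually_gt_atTop 1] with ρ hρ
  have hlogρ : 0 < log ρ := log_pos hρ
  have hlogT : log (outageThreshold c ρ) = log (ρ ^ c - 1) - log ρ :=
    log_div (sub_pos.2 (one_lt_rpow hρ hc0)).ne' (by linarith)
  rw [hlogT]
  field_simp
  ring

theorem Fin.card_filter_le_val {n m : ℕ} : #{i : Fin n | m ≤ (i : ℕ)} = n - m := by
  have h := card_filter_add_card_filter_not (s := univ) fun i : Fin n => (i : ℕ) < m
  simp only [not_lt, Fin.card_filter_val_lt, card_univ, Fintype.card_fin] at h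
  omega

theorem source_relay_outage_pattern_exponent_general {Ω : Type*} [MeasurableSpace Ω]
    (μ : Measure Ω) [IsProbabilityMeasure μ]
    (N k : ℕ) (hk : k ≤ N) (r : ℝ) (hr0 : 0 < r) (hr1 : r < 1 / 2)
    (H : Fin N → Ω → ℝ) (hH : ∀ i, IsExp1 μ (H i)) :
    Tendsto (fun ρ : ℝ =>
        Real.log
          ((∏ i ∈ Finset.univ.filter (fun i : Fin N => (i : ℕ) < k),
              (μ {ω | 2 * r * Real.logb 2 ρ ≤ Real.logb 2 (1 + ρ * H i ω)}).toReal) *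
            ∏ i ∈ Finset.univ.filter (fun i : Fin N => k ≤ (i : ℕ)),
              (μ {ω | Real.logb 2 (1 + ρ * H i ω) < 2 * r * Real.logb 2 ρ}).toReal)
          / Real.log ρ)
      atTop (nhds (-((N : ℝ) - (k : ℝ)) * (1 - 2 * r))) := by
  have hc0 : 0 < 2 * r := by linarith
  have hc1 : 2 * r < 1 := by linarith
  have hinv : Tendsto (fun ρ => (log ρ)⁻¹) atTop (𝓝 0) := tendsto_log_atTop.inv_tendsto_atTop
  have hlim := ((((tendsto_outageThreshold_nhdsGT_zero hc0 hc1).mono_right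
    nhdsWithin_le_nhds).const_mul (-(k : ℝ))).mul hinv).add
    ((tendsto_log_one_sub_exp_neg_outageThreshold_div_log hc0 hc1).const_mul ((N : ℝ) - k))
  rw [show -(k : ℝ) * 0 * 0 + ((N : ℝ) - k) * (2 * r - 1) = -((N : ℝ) - k) * (1 - 2 * r) by
    ring] at hlim
  refine hlim.congr' ?_
  filter_upwards [eventually_gt_atTop 1] with ρ hρ
  simp only [← measureReal_def, fun i => (hH i).measureReal_not_outage one_lt_two hc0 hρ,
    fun i => (hH i).measureReal_outage one_lt_two hc0 hρ, prod_const, Fin.card_filter_val_lt,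
    min_eq_right hk, Fin.card_filter_le_val]
  have hpos : 0 < 1 - exp (-outageThreshold (2 * r) ρ) := by
    simp [outageThreshold_pos hc0 hρ]
  rw [log_mul (by positivity) (pow_pos hpos _).ne', log_pow, log_pow, log_exp, Nat.cast_sub hk]
  ring

/-- for multiplexing gain r ∈ (0,1/2), the probability
Q(ρ) = ∏_{i≤k} P{log₂(1+ρHᵢ) ≥ 2r log₂ ρ} · ∏_{i>k} P{log₂(1+ρHᵢ) < 2r log₂ ρ}
that exactly the first k source–relay links are not in outage satisfies
lim_{ρ→∞} ln Q(ρ)/ln ρ = −(N−k)(1−2r). -/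
theorem source_relay_outage_pattern_exponent {Ω : Type*} [MeasurableSpace Ω]
    (μ : Measure Ω) [IsProbabilityMeasure μ]
    (N k : ℕ) (hN : 1 ≤ N) (hk : k ≤ N) (r : ℝ) (hr0 : 0 < r) (hr1 : r < 1 / 2)
    (H : Fin N → Ω → ℝ) (hH : ∀ i, IsExp1 μ (H i))
    (hindep : iIndepFun H μ) :
    Tendsto (fun ρ : ℝ =>
        Real.log
          ((∏ i ∈ Finset.univ.filter (fun i : Fin N => (i : ℕ) < k),
              (μ {ω | 2 * r * Real.logb 2 ρ ≤ Real.logb 2 (1 + ρ * H i ω)}).toReal) *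
            ∏ i ∈ Finset.univ.filter (fun i : Fin N => k ≤ (i : ℕ)),
              (μ {ω | Real.logb 2 (1 + ρ * H i ω) < 2 * r * Real.logb 2 ρ}).toReal)
          / Real.log ρ)
      atTop (nhds (-((N : ℝ) - (k : ℝ)) * (1 - 2 * r))) :=
  source_relay_outage_pattern_exponent_general μ N k hk r hr0 hr1 H hH
end

section
/- Let N ≥ 1, let X₁, …, X_N be independent Exp(1)-distributed random variables, and for ρ > 1 set u_j(ρ) = −ln X_j / ln ρ. Let O ⊆ ℝ^N be a set such that inf{ Σ_{j=1}^{N} u_j : u ∈ interior(O) ∩ [0,∞)^N } = inf{ Σ_{j=1}^{N} u_j : u ∈ closure(O) ∩ [0,∞)^N } = d with d < ∞. Then lim_{ρ→∞} ln P{ (u₁(ρ),…,u_N(ρ)) ∈ O } / ln ρ = −d. -/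
open MeasureTheory ProbabilityTheory Filter

/-!
Write `u_j = expOrder ρ (X_j)`, so that `c ≤ u_j ↔ X_j ≤ ρ^(-c)`. Since `P(X ≤ x) ≈ x` for small
`x`, we get `P(u_j ≥ c) ≤ ρ^(-c)` and `P(u_j ∈ [v, v + r)) ≳ ρ^(-v)`, while
`P(u_j < -δ) = exp(-ρ^δ)` is negligible against every power of `ρ`.

Lower bound: a small box `∏ [v_j, v_j + r)` inside `O` around a point `v ∈ interior O ∩ ℝ₊^N` has
probability `≳ ρ^(-∑ v_j)` by independence, and `∑ v_j` can be taken arbitrarily close to `d`.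

Upper bound: by compactness, `∑ u_j⁺ ≥ d - ε` on `closure O ∩ {u | ∀ j, -δ ≤ u_j}` for some `δ > 0`.
The event `{∑ u_j⁺ ≥ t}` is covered by the finitely many orthants `{u | γ k ≤ u⁺}` of a grid of mesh
`γ` with `γ ∑ k_j ≥ t - Nγ`, each of probability `≤ ρ^(-γ ∑ k_j)` by independence; hence
`P(u ∈ O) ≲ N exp(-ρ^δ) + ρ^(-(d - ε - Nγ))`.
-/

open Real

noncomputable def expOrder (ρ x : ℝ) : ℝ := -log x / log ρ

section expOrder

variable {ρ x c : ℝ}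

lemma le_expOrder_iff (hρ : 1 < ρ) (hx : 0 < x) : c ≤ expOrder ρ x ↔ x ≤ ρ ^ (-c) := by
  rw [expOrder, neg_div, le_neg, log_div_log, logb_le_iff_le_rpow hρ hx]

lemma expOrder_lt_iff (hρ : 1 < ρ) (hx : 0 < x) : expOrder ρ x < c ↔ ρ ^ (-c) < x := by
  rw [expOrder, neg_div, neg_lt, log_div_log, lt_logb_iff_rpow_lt hρ hx]

lemma measurable_expOrder : Measurable (expOrder ρ) :=
  measurable_log.neg.div_const _

end expOrder

section Asymptotics

lemma eventually_mul_rpow_le_rpow (K : ℝ) {a b : ℝ} (hab : a < b) :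
    ∀ᶠ ρ in atTop, K * ρ ^ a ≤ ρ ^ b := by
  filter_upwards [(tendsto_rpow_atTop (sub_pos.2 hab)).eventually_ge_atTop K,
    eventually_gt_atTop 0] with ρ hK hρ
  calc K * ρ ^ a ≤ ρ ^ (b - a) * ρ ^ a := by gcongr
    _ = ρ ^ b := by rw [← rpow_add hρ, sub_add_cancel]

lemma eventually_mul_exp_neg_rpow_le_rpow (K : ℝ) {δ : ℝ} (hδ : 0 < δ) (b : ℝ) :
    ∀ᶠ ρ in atTop, K * exp (-ρ ^ δ) ≤ ρ ^ b := by
  have h := ((isLittleO_exp_neg_mul_rpow_atTop one_pos (b / δ)).const_mul_left K).def one_pos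
  filter_upwards [(tendsto_rpow_atTop hδ).eventually h, eventually_gt_atTop 0] with ρ hρ hρ0
  rw [← rpow_mul hρ0.le, mul_div_cancel₀ _ hδ.ne', neg_one_mul, one_mul,
    norm_of_nonneg (rpow_nonneg hρ0.le _)] at hρ
  exact (le_abs_self _).trans hρ

lemma tendsto_log_div_log_of_rpow_bounds {f : ℝ → ℝ} {d : ℝ}
    (h : ∀ ε > 0, ∀ᶠ ρ in atTop, ρ ^ (-(d + ε)) ≤ f ρ ∧ f ρ ≤ ρ ^ (-(d - ε))) :
    Tendsto (fun ρ => log (f ρ) / log ρ) atTop (nhds (-d)) := by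
  rw [Metric.tendsto_nhds]
  intro ε hε
  filter_upwards [h (ε / 2) (half_pos hε), eventually_gt_atTop 1] with ρ ⟨hlo, hhi⟩ hρ
  have hρ0 : 0 < ρ := one_pos.trans hρ
  have hL : 0 < log ρ := log_pos hρ
  have h1 : -(d + ε / 2) ≤ log (f ρ) / log ρ := by
    rw [le_div_iff₀ hL, ← log_rpow hρ0]
    exact log_le_log (rpow_pos_of_pos hρ0 _) hlo
  have h2 : log (f ρ) / log ρ ≤ -(d - ε / 2) := by
    rw [div_le_iff₀ hL, ← log_rpow hρ0]
    exact log_le_log ((rpow_pos_of_pos hρ0 _).trans_le hlo) hhi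
  rw [Real.dist_eq, abs_lt]
  constructor <;> linarith

end Asymptotics

namespace IsExp1

variable {Ω : Type*} [MeasurableSpace Ω] {μ : Measure Ω} {X : Ω → ℝ}

lemma measure_le_le [IsProbabilityMeasure μ] (hX : IsExp1 μ X) {t : ℝ} (ht : 0 ≤ t) :
    μ {ω | X ω ≤ t} ≤ ENNReal.ofReal t := by
  have hm : MeasurableSet {ω | t < X ω} := measurableSet_lt measurable_const hX.1
  calc μ {ω | X ω ≤ t} = μ {ω | t < X ω}ᶜ := by simp only [Set.compl_ofPred, not_lt]
    _ = ENNReal.ofReal (1 - exp (-t)) := by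
      rw [prob_compl_eq_one_sub hm, hX.2 t ht, ENNReal.ofReal_sub _ (exp_nonneg _),
        ENNReal.ofReal_one]
    _ ≤ ENNReal.ofReal t := ENNReal.ofReal_le_ofReal (by linarith [add_one_le_exp (-t)])

lemma measure_preimage_Ioc (hX : IsExp1 μ X) {a b : ℝ} (ha : 0 ≤ a) (hab : a ≤ b) :
    μ (X ⁻¹' Set.Ioc a b) = ENNReal.ofReal (exp (-a) - exp (-b)) := by
  have hsub : {ω | b < X ω} ⊆ {ω | a < X ω} := fun ω hω => hab.trans_lt hω
  have hdiff : X ⁻¹' Set.Ioc a b = {ω | a < X ω} \ {ω | b < X ω} := by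
    ext ω
    simp only [Set.mem_preimage, Set.mem_Ioc, Set.mem_sdiff, Set.mem_ofPred_eq, not_lt]
  rw [hdiff, measure_sdiff hsub (measurableSet_lt measurable_const hX.1).nullMeasurableSet
      (by simp [hX.2 b (ha.trans hab)]),
    hX.2 a ha, hX.2 b (ha.trans hab), ← ENNReal.ofReal_sub _ (exp_nonneg _)]

lemma le_measure_preimage_Ioc (hX : IsExp1 μ X) {a b : ℝ} (ha : 0 ≤ a) (hab : a ≤ b)
    (hb : b ≤ 1) : ENNReal.ofReal ((b - a) / exp 1) ≤ μ (X ⁻¹' Set.Ioc a b) := by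
  rw [hX.measure_preimage_Ioc ha hab]
  refine ENNReal.ofReal_le_ofReal ?_
  have hba : 0 ≤ b - a := sub_nonneg.2 hab
  calc (b - a) / exp 1 = exp (-1) * (b - a) := by rw [exp_neg]; ring
    _ ≤ exp (-b) * (b - a) := mul_le_mul_of_nonneg_right (exp_le_exp.2 (by linarith)) hba
    _ ≤ exp (-b) * (exp (b - a) - 1) :=
        mul_le_mul_of_nonneg_left (by linarith [add_one_le_exp (b - a)]) (exp_nonneg _)
    _ = exp (-a) - exp (-b) := by rw [mul_sub, ← exp_add]; ring_nf

lemma measure_le_posPart_expOrder_le [IsProbabilityMeasure μ] (hX : IsExp1 μ X) {ρ : ℝ}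
    (hρ : 1 < ρ) (c : ℝ) :
    μ {ω | c ≤ (expOrder ρ (X ω))⁺} ≤ ENNReal.ofReal (ρ ^ (-c)) := by
  have hρ0 : 0 < ρ := one_pos.trans hρ
  rcases le_or_gt c 0 with hc | hc
  · calc μ _ ≤ 1 := prob_le_one
      _ ≤ ENNReal.ofReal (ρ ^ (-c)) := by
        rw [← ENNReal.ofReal_one]
        exact ENNReal.ofReal_le_ofReal (one_le_rpow hρ.le (neg_nonneg.2 hc))
  · refine (measure_mono fun ω hω => ?_).trans (hX.measure_le_le (rpow_nonneg hρ0.le (-c)))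
    have hcu : c ≤ expOrder ρ (X ω) := (le_max_iff.1 hω).resolve_right hc.not_ge
    rcases le_or_gt (X ω) 0 with hx | hx
    -- `expOrder ρ (X ω)` is a junk value here, but the inclusion holds anyway
    · exact hx.trans (rpow_nonneg hρ0.le _)
    · exact (le_expOrder_iff hρ hx).1 hcu

lemma measure_expOrder_lt_le [IsProbabilityMeasure μ] (hX : IsExp1 μ X) {ρ : ℝ} (hρ : 1 < ρ)
    (δ : ℝ) : μ {ω | expOrder ρ (X ω) < -δ} ≤ ENNReal.ofReal (exp (-ρ ^ δ)) := by
  have hρ0 : 0 < ρ := one_pos.trans hρ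
  have hnonpos : μ {ω | X ω ≤ 0} = 0 := by simpa using hX.measure_le_le le_rfl
  calc μ {ω | expOrder ρ (X ω) < -δ} ≤ μ ({ω | X ω ≤ 0} ∪ {ω | ρ ^ δ < X ω}) := by
        refine measure_mono fun ω hω => ?_
        rcases le_or_gt (X ω) 0 with hx | hx
        · exact Or.inl hx
        · exact Or.inr (by simpa using (expOrder_lt_iff hρ hx).1 hω)
    _ ≤ μ {ω | X ω ≤ 0} + μ {ω | ρ ^ δ < X ω} := measure_union_le _ _
    _ = ENNReal.ofReal (exp (-ρ ^ δ)) := by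
        rw [hnonpos, zero_add, hX.2 _ (rpow_nonneg hρ0.le _)]

lemma le_measure_expOrder_mem_Ico (hX : IsExp1 μ X) {ρ v η : ℝ} (hρ : 1 < ρ) (hv : 0 ≤ v)
    (hη : 0 ≤ η) :
    ENNReal.ofReal ((1 - ρ ^ (-η)) / exp 1 * ρ ^ (-v)) ≤
      μ (X ⁻¹' (expOrder ρ ⁻¹' Set.Ico v (v + η))) := by
  have hρ0 : 0 < ρ := one_pos.trans hρ
  have hwindow : Set.Ioc (ρ ^ (-(v + η))) (ρ ^ (-v)) ⊆ expOrder ρ ⁻¹' Set.Ico v (v + η) :=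
    fun x ⟨hlo, hhi⟩ =>
      have hx : 0 < x := (rpow_pos_of_pos hρ0 _).trans hlo
      ⟨(le_expOrder_iff hρ hx).2 hhi, (expOrder_lt_iff hρ hx).2 hlo⟩
  calc ENNReal.ofReal ((1 - ρ ^ (-η)) / exp 1 * ρ ^ (-v))
      = ENNReal.ofReal ((ρ ^ (-v) - ρ ^ (-(v + η))) / exp 1) := by
        rw [neg_add, rpow_add hρ0]; ring_nf
    _ ≤ μ (X ⁻¹' Set.Ioc (ρ ^ (-(v + η))) (ρ ^ (-v))) :=
        hX.le_measure_preimage_Ioc (rpow_nonneg hρ0.le _)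
          (rpow_le_rpow_of_exponent_le hρ.le (by linarith))
          (rpow_le_one_of_one_le_of_nonpos hρ.le (by linarith))
    _ ≤ _ := measure_mono (Set.preimage_mono hwindow)

end IsExp1

lemma exists_pos_forall_sub_le_sum_posPart_of_isClosed {ι : Type*} [Fintype ι]
    {C : Set (ι → ℝ)} (hC : IsClosed C) {d ε : ℝ}
    (hd : ∀ u ∈ C, (∀ j, 0 ≤ u j) → d ≤ ∑ j, u j) (hε : 0 < ε) :
    ∃ δ > 0, ∀ u ∈ C, (∀ j, -δ ≤ u j) → d - ε ≤ ∑ j, (u j)⁺ := by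
  by_contra! h
  set t : ℕ → Set (ι → ℝ) := fun n =>
    C ∩ {u | ∀ j, -(1 / ((n : ℝ) + 1)) ≤ u j} ∩ {u | ∑ j, (u j)⁺ ≤ d - ε}
  have ht_closed : ∀ n, IsClosed (t n) := fun n => by
    have hsum : Continuous fun u : ι → ℝ => ∑ j, (u j)⁺ :=
      continuous_finsetSum _ fun j _ => continuous_posPart.comp (continuous_apply j)
    refine (hC.inter ?_).inter (isClosed_le hsum continuous_const)
    simp only [Set.ofPred_forall]
    exact isClosed_iInter fun j => isClosed_le continuous_const (continuous_apply j)
  have ht_box : t 0 ⊆ Set.univ.pi fun _ => Set.Icc (-1) (d - ε) := by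
    rintro u ⟨⟨-, hlow⟩, hsum⟩ j -
    refine ⟨by simpa using hlow j, ?_⟩
    calc u j ≤ (u j)⁺ := le_posPart _
      _ ≤ ∑ i, (u i)⁺ :=
        Finset.single_le_sum (f := fun i => (u i)⁺) (fun i _ => posPart_nonneg _)
          (Finset.mem_univ j)
      _ ≤ d - ε := hsum
  obtain ⟨u, hu⟩ := IsCompact.nonempty_iInter_of_sequence_nonempty_isCompact_isClosed t
    (fun n => by
      refine Set.inter_subset_inter_left _ (Set.inter_subset_inter_right _ fun u hu j => ?_)
      refine le_trans (neg_le_neg ?_) (hu j)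
      gcongr
      linarith)
    (fun n => by
      obtain ⟨u, huC, hlow, hsum⟩ := h (1 / ((n : ℝ) + 1)) (by positivity)
      exact ⟨u, ⟨huC, hlow⟩, hsum.le⟩)
    ((isCompact_univ_pi fun _ => isCompact_Icc).of_isClosed_subset (ht_closed 0) ht_box)
    ht_closed
  simp only [Set.mem_iInter] at hu
  have hu0 : ∀ j, 0 ≤ u j := fun j => by
    by_contra! hneg
    obtain ⟨n, hn⟩ := exists_nat_one_div_lt (neg_pos.2 hneg)
    linarith [(hu n).1.2 j]
  have hsum : ∑ j, (u j)⁺ ≤ d - ε := (hu 0).2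
  rw [Finset.sum_congr rfl fun j _ => posPart_of_nonneg (hu0 j)] at hsum
  linarith [hd u (hu 0).1.1 hu0]

lemma exists_mem_piFinset_floor_grid {ι : Type*} [Fintype ι] [DecidableEq ι] {γ t : ℝ}
    (hγ : 0 < γ) (ht : 0 ≤ t) {y : ι → ℝ} (hy : ∀ j, 0 ≤ y j) (hsum : t ≤ ∑ j, y j) :
    ∃ k ∈ Fintype.piFinset fun _ : ι => Finset.range (⌊t / γ⌋₊ + 1),
      (∀ j, γ * k j ≤ y j) ∧ t - Fintype.card ι * γ ≤ γ * ∑ j, (k j : ℝ) := by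
  have hmin : t ≤ ∑ j, min (y j) t := by
    by_cases hbig : ∃ j, t ≤ y j
    · obtain ⟨j, hj⟩ := hbig
      calc t = min (y j) t := (min_eq_right hj).symm
        _ ≤ ∑ i, min (y i) t :=
          Finset.single_le_sum (fun i _ => le_min (hy i) ht) (Finset.mem_univ j)
    · simp only [not_exists, not_le] at hbig
      simpa only [min_eq_left (hbig _).le] using hsum
  -- truncating at `t` keeps the grid finite without losing the lower bound on the sum
  refine ⟨fun j => ⌊min (y j) t / γ⌋₊, ?_, fun j => ?_, ?_⟩
  · simp only [Fintype.mem_piFinset, Finset.mem_range, Nat.lt_succ_iff]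
    exact fun j => Nat.floor_le_floor (by gcongr; exact min_le_right _ _)
  · calc γ * ⌊min (y j) t / γ⌋₊ ≤ γ * (min (y j) t / γ) :=
          by gcongr; exact Nat.floor_le (div_nonneg (le_min (hy j) ht) hγ.le)
      _ = min (y j) t := mul_div_cancel₀ _ hγ.ne'
      _ ≤ y j := min_le_left _ _
  · have hfloor : ∀ j, min (y j) t ≤ γ * ⌊min (y j) t / γ⌋₊ + γ := fun j => by
      have := Nat.lt_floor_add_one (min (y j) t / γ)
      rw [div_lt_iff₀ hγ] at this
      linarith
    calc t - Fintype.card ι * γ ≤ ∑ j, (γ * ⌊min (y j) t / γ⌋₊ + γ) - Fintype.card ι * γ := by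
          gcongr; exact hmin.trans (Finset.sum_le_sum fun j _ => hfloor j)
      _ = γ * ∑ j, (⌊min (y j) t / γ⌋₊ : ℝ) := by
          rw [Finset.sum_add_distrib, ← Finset.mul_sum, Finset.sum_const, Finset.card_univ,
            nsmul_eq_mul]
          ring

section ProbabilityBounds

variable {Ω : Type*} [MeasurableSpace Ω] {μ : Measure Ω} {ι : Type*} [Fintype ι]

lemma ProbabilityTheory.iIndepFun.measure_iInter_preimage_eq_prod {β : ι → Type*}
    {mβ : ∀ j, MeasurableSpace (β j)} {Y : ∀ j, Ω → β j} (h : iIndepFun Y μ)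
    {S : ∀ j, Set (β j)} (hS : ∀ j, MeasurableSet (S j)) :
    μ (⋂ j, Y j ⁻¹' S j) = ∏ j, μ (Y j ⁻¹' S j) := by
  simpa using h.measure_inter_preimage_eq_mul Finset.univ fun j _ => hS j

lemma exists_measure_le_sum_le_rpow (t : ℝ) {η : ℝ} (hη : 0 < η) :
    ∃ K : ℕ, ∀ (ρ : ℝ) (Y : ι → Ω → ℝ), 1 ≤ ρ → iIndepFun Y μ → (∀ j ω, 0 ≤ Y j ω) →
      (∀ j c, 0 ≤ c → μ {ω | c ≤ Y j ω} ≤ ENNReal.ofReal (ρ ^ (-c))) →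
      μ {ω | t ≤ ∑ j, Y j ω} ≤ ENNReal.ofReal (K * ρ ^ (-(t - η))) := by
  classical
  set γ := η / (Fintype.card ι + 1)
  have hγ : 0 < γ := by positivity
  have hcardγ : Fintype.card ι * γ ≤ η := by
    rw [mul_div_assoc', div_le_iff₀ (by positivity)]
    nlinarith
  set s := max t 0
  set G := (Fintype.piFinset fun _ : ι => Finset.range (⌊s / γ⌋₊ + 1)).filter
    fun k => s - Fintype.card ι * γ ≤ γ * ∑ j, (k j : ℝ)
  refine ⟨G.card, fun ρ Y hρ hind hY htail => ?_⟩
  have hcover : {ω | t ≤ ∑ j, Y j ω} ⊆ ⋃ k ∈ G, ⋂ j, Y j ⁻¹' Set.Ici (γ * k j) := by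
    intro ω hω
    obtain ⟨k, hkG, hk, hksum⟩ := exists_mem_piFinset_floor_grid hγ (le_max_right t 0)
      (fun j => hY j ω) (max_le hω (Finset.sum_nonneg fun j _ => hY j ω))
    exact Set.mem_biUnion (Finset.mem_filter.2 ⟨hkG, hksum⟩) (Set.mem_iInter.2 hk)
  have hcell : ∀ k ∈ G, μ (⋂ j, Y j ⁻¹' Set.Ici (γ * k j)) ≤
      ENNReal.ofReal (ρ ^ (-(t - η))) := by
    intro k hk
    have hksum := (Finset.mem_filter.1 hk).2
    rw [hind.measure_iInter_preimage_eq_prod fun j => measurableSet_Ici]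
    calc ∏ j, μ (Y j ⁻¹' Set.Ici (γ * k j)) ≤ ∏ j, ENNReal.ofReal (ρ ^ (-(γ * k j))) :=
          Finset.prod_le_prod' fun j _ => htail j _ (by positivity)
      _ = ENNReal.ofReal (ρ ^ (-(γ * ∑ j, (k j : ℝ)))) := by
          rw [← ENNReal.ofReal_prod_of_nonneg fun j _ => by positivity,
            ← rpow_sum_of_pos (by linarith), Finset.mul_sum, Finset.sum_neg_distrib]
      _ ≤ ENNReal.ofReal (ρ ^ (-(t - η))) :=
          ENNReal.ofReal_le_ofReal (rpow_le_rpow_of_exponent_le hρ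
            (by linarith [le_max_left t 0]))
  calc μ {ω | t ≤ ∑ j, Y j ω} ≤ μ (⋃ k ∈ G, ⋂ j, Y j ⁻¹' Set.Ici (γ * k j)) := measure_mono hcover
    _ ≤ ∑ k ∈ G, μ (⋂ j, Y j ⁻¹' Set.Ici (γ * k j)) := measure_biUnion_finset_le _ _
    _ ≤ ∑ k ∈ G, ENNReal.ofReal (ρ ^ (-(t - η))) := Finset.sum_le_sum hcell
    _ = ENNReal.ofReal (G.card * ρ ^ (-(t - η))) := by
        rw [Finset.sum_const, nsmul_eq_mul, ENNReal.ofReal_mul (Nat.cast_nonneg _),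
          ENNReal.ofReal_natCast]

variable [IsProbabilityMeasure μ] {X : ι → Ω → ℝ}

lemma eventually_rpow_le_measureReal_expOrder_mem (hX : ∀ j, IsExp1 μ (X j))
    (hindep : iIndepFun X μ) {O : Set (ι → ℝ)} {v : ι → ℝ} (hv : v ∈ interior O)
    (hv0 : ∀ j, 0 ≤ v j) {c : ℝ} (hc : ∑ j, v j < c) :
    ∀ᶠ ρ in atTop, ρ ^ (-c) ≤ μ.real {ω | (fun j => expOrder ρ (X j ω)) ∈ O} := by
  obtain ⟨r, hr, hball⟩ := Metric.isOpen_iff.1 isOpen_interior v hv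
  replace hball : Metric.ball v r ⊆ O := hball.trans interior_subset
  set κ := (2 * exp 1)⁻¹ ^ Fintype.card ι
  have hκ : 0 < κ := by positivity
  filter_upwards [eventually_gt_atTop 1, (tendsto_rpow_neg_atTop hr).eventually_le_const
    (by norm_num : (0 : ℝ) < 1 / 2), eventually_mul_rpow_le_rpow κ⁻¹ (neg_lt_neg hc)]
    with ρ hρ hhalf hpow
  have hρ0 : 0 < ρ := one_pos.trans hρ
  set B := ⋂ j, X j ⁻¹' (expOrder ρ ⁻¹' Set.Ico (v j) (v j + r))
  have hB : B ⊆ {ω | (fun j => expOrder ρ (X j ω)) ∈ O} := fun ω hω => by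
    simp only [B, Set.mem_iInter, Set.mem_preimage, Set.mem_Ico] at hω
    refine hball ((dist_pi_lt_iff hr).2 fun j => ?_)
    rw [Real.dist_eq, abs_sub_lt_iff]
    constructor <;> linarith [hω j]
  have hfactor : κ * ρ ^ (-∑ j, v j) ≤ ∏ j, (1 - ρ ^ (-r)) / exp 1 * ρ ^ (-v j) := by
    rw [Finset.prod_mul_distrib, Finset.prod_const, Finset.card_univ, ← rpow_sum_of_pos hρ0,
      Finset.sum_neg_distrib]
    have hq : (2 * exp 1)⁻¹ ≤ (1 - ρ ^ (-r)) / exp 1 := by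
      rw [inv_eq_one_div, ← div_div]
      gcongr
      linarith
    exact mul_le_mul_of_nonneg_right (pow_le_pow_left₀ (by positivity) hq _)
      (rpow_nonneg hρ0.le _)
  rw [measureReal_def, ← ENNReal.ofReal_le_iff_le_toReal (measure_ne_top _ _)]
  calc ENNReal.ofReal (ρ ^ (-c))
      ≤ ENNReal.ofReal (∏ j, (1 - ρ ^ (-r)) / exp 1 * ρ ^ (-v j)) := by
        refine ENNReal.ofReal_le_ofReal (le_trans ?_ hfactor)
        rwa [inv_mul_le_iff₀ hκ] at hpow
    _ = ∏ j, ENNReal.ofReal ((1 - ρ ^ (-r)) / exp 1 * ρ ^ (-v j)) :=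
        ENNReal.ofReal_prod_of_nonneg fun j _ =>
          mul_nonneg (div_nonneg (by linarith) (exp_nonneg _)) (rpow_nonneg hρ0.le _)
    _ ≤ ∏ j, μ (X j ⁻¹' (expOrder ρ ⁻¹' Set.Ico (v j) (v j + r))) :=
        Finset.prod_le_prod' fun j _ => (hX j).le_measure_expOrder_mem_Ico hρ (hv0 j) hr.le
    _ = μ B := (hindep.measure_iInter_preimage_eq_prod fun j =>
        measurable_expOrder measurableSet_Ico).symm
    _ ≤ _ := measure_mono hB

lemma eventually_measureReal_expOrder_mem_le (hX : ∀ j, IsExp1 μ (X j))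
    (hindep : iIndepFun X μ) {O : Set (ι → ℝ)} {d : ℝ}
    (hd : ∀ u ∈ closure O, (∀ j, 0 ≤ u j) → d ≤ ∑ j, u j) {ε : ℝ} (hε : 0 < ε) :
    ∀ᶠ ρ in atTop, μ.real {ω | (fun j => expOrder ρ (X j ω)) ∈ O} ≤ ρ ^ (-(d - ε)) := by
  obtain ⟨δ, hδ, hnear⟩ :=
    exists_pos_forall_sub_le_sum_posPart_of_isClosed isClosed_closure hd (by positivity : 0 < ε / 4)
  obtain ⟨K, hK⟩ := exists_measure_le_sum_le_rpow (μ := μ) (ι := ι) (d - ε / 4)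
    (by positivity : 0 < ε / 4)
  filter_upwards [eventually_gt_atTop 1,
    eventually_mul_exp_neg_rpow_le_rpow (2 * Fintype.card ι) hδ (-(d - ε)),
    eventually_mul_rpow_le_rpow (2 * K) (by linarith : -(d - ε / 4 - ε / 4) < -(d - ε))]
    with ρ hρ hexp hpow
  have hρ0 : 0 < ρ := one_pos.trans hρ
  set A := ⋃ j, {ω | expOrder ρ (X j ω) < -δ}
  set S := {ω | d - ε / 4 ≤ ∑ j, (expOrder ρ (X j ω))⁺}
  have hcover : {ω | (fun j => expOrder ρ (X j ω)) ∈ O} ⊆ A ∪ S := fun ω hω => by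
    by_cases hlow : ∃ j, expOrder ρ (X j ω) < -δ
    · exact Or.inl (Set.mem_iUnion.2 hlow)
    · simp only [not_exists, not_lt] at hlow
      exact Or.inr (hnear _ (subset_closure hω) hlow)
  have hA : μ A ≤ ENNReal.ofReal (Fintype.card ι * exp (-ρ ^ δ)) :=
    calc μ A ≤ ∑ j, μ {ω | expOrder ρ (X j ω) < -δ} := measure_iUnion_fintype_le _ _
      _ ≤ ∑ _j : ι, ENNReal.ofReal (exp (-ρ ^ δ)) :=
          Finset.sum_le_sum fun j _ => (hX j).measure_expOrder_lt_le hρ δ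
      _ = ENNReal.ofReal (Fintype.card ι * exp (-ρ ^ δ)) := by
          rw [Finset.sum_const, Finset.card_univ, nsmul_eq_mul,
            ENNReal.ofReal_mul (Nat.cast_nonneg _), ENNReal.ofReal_natCast]
  have hS : μ S ≤ ENNReal.ofReal (K * ρ ^ (-(d - ε / 4 - ε / 4))) :=
    hK ρ (fun j ω => (expOrder ρ (X j ω))⁺) hρ.le
      (hindep.comp _ fun _ => measurable_posPart.comp measurable_expOrder)
      (fun _ _ => posPart_nonneg _) fun j c _ => (hX j).measure_le_posPart_expOrder_le hρ c
  rw [measureReal_def]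
  refine ENNReal.toReal_le_of_le_ofReal (rpow_nonneg hρ0.le _) ?_
  calc μ {ω | (fun j => expOrder ρ (X j ω)) ∈ O} ≤ μ A + μ S :=
        (measure_mono hcover).trans (measure_union_le _ _)
    _ ≤ ENNReal.ofReal (Fintype.card ι * exp (-ρ ^ δ)) +
          ENNReal.ofReal (K * ρ ^ (-(d - ε / 4 - ε / 4))) := add_le_add hA hS
    _ = ENNReal.ofReal (Fintype.card ι * exp (-ρ ^ δ) + K * ρ ^ (-(d - ε / 4 - ε / 4))) :=
        (ENNReal.ofReal_add (by positivity) (by positivity)).symm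
    _ ≤ ENNReal.ofReal (ρ ^ (-(d - ε))) := ENNReal.ofReal_le_ofReal (by linarith)

end ProbabilityBounds

theorem exponential_orders_set_probability_exponent_general {Ω : Type*} [MeasurableSpace Ω]
    (μ : Measure Ω) [IsProbabilityMeasure μ]
    (N : ℕ) (X : Fin N → Ω → ℝ) (hX : ∀ j, IsExp1 μ (X j))
    (hindep : iIndepFun X μ)
    (O : Set (Fin N → ℝ)) (d : ℝ)
    (hne : ((fun u : Fin N → ℝ => ∑ j, u j) ''
        (interior O ∩ {u | ∀ j, 0 ≤ u j})).Nonempty)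
    (hint : sInf ((fun u : Fin N → ℝ => ∑ j, u j) ''
        (interior O ∩ {u | ∀ j, 0 ≤ u j})) = d)
    (hclo : sInf ((fun u : Fin N → ℝ => ∑ j, u j) ''
        (closure O ∩ {u | ∀ j, 0 ≤ u j})) = d) :
    Tendsto (fun ρ : ℝ =>
        Real.log ((μ {ω | (fun j => -Real.log (X j ω) / Real.log ρ) ∈ O}).toReal)
          / Real.log ρ)
      atTop (nhds (-d)) := by
  have hd : ∀ u ∈ closure O, (∀ j, 0 ≤ u j) → d ≤ ∑ j, u j := fun u hu hu0 =>
    hclo ▸ csInf_le ⟨0, by rintro _ ⟨w, ⟨-, hw⟩, rfl⟩; exact Finset.sum_nonneg fun j _ => hw j⟩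
      ⟨u, ⟨hu, hu0⟩, rfl⟩
  refine tendsto_log_div_log_of_rpow_bounds fun ε hε => ?_
  obtain ⟨_, ⟨v, ⟨hv, hv0⟩, rfl⟩, hvd⟩ :=
    exists_lt_of_csInf_lt hne (hint ▸ lt_add_of_pos_right d (half_pos hε))
  exact (eventually_rpow_le_measureReal_expOrder_mem hX hindep hv hv0 (by linarith)).and
    (eventually_measureReal_expOrder_mem_le hX hindep hd hε)

/-- Lemma 2 of the paper: if X₁,…,X_N are i.i.d. Exp(1) and
u_j(ρ) = −ln X_j/ln ρ are their exponential orders, and O ⊆ ℝ^N is a set such that the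
infimum of Σ u_j over interior(O) ∩ ℝ₊^N and over closure(O) ∩ ℝ₊^N are both equal to a
finite d (the interior intersection being nonempty, i.e. d < ∞), then
P{(u₁(ρ),…,u_N(ρ)) ∈ O} ≐ ρ^{−d}, i.e. ln P{u(ρ) ∈ O}/ln ρ → −d as ρ → ∞. -/
theorem exponential_orders_set_probability_exponent {Ω : Type*} [MeasurableSpace Ω]
    (μ : Measure Ω) [IsProbabilityMeasure μ]
    (N : ℕ) (hN : 1 ≤ N) (X : Fin N → Ω → ℝ) (hX : ∀ j, IsExp1 μ (X j))
    (hindep : iIndepFun X μ)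
    (O : Set (Fin N → ℝ)) (d : ℝ)
    (hne : ((fun u : Fin N → ℝ => ∑ j, u j) ''
        (interior O ∩ {u | ∀ j, 0 ≤ u j})).Nonempty)
    (hint : sInf ((fun u : Fin N → ℝ => ∑ j, u j) ''
        (interior O ∩ {u | ∀ j, 0 ≤ u j})) = d)
    (hclo : sInf ((fun u : Fin N → ℝ => ∑ j, u j) ''
        (closure O ∩ {u | ∀ j, 0 ≤ u j})) = d) :
    Tendsto (fun ρ : ℝ =>
        Real.log ((μ {ω | (fun j => -Real.log (X j ω) / Real.log ρ) ∈ O}).toReal)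
          / Real.log ρ)
      atTop (nhds (-d)) :=
  exponential_orders_set_probability_exponent_general μ N X hX hindep O d hne hint hclo
end
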